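/- arXiv:1304.3613 — 2 statements merged into one kernel-verified Lean document; each statement's English description precedes it below -/
import Mathlib

section
/- Let Π be an instance of NotAllEqual 3-SAT with n clauses and G(Π)=(V,E), b, r the associated construction. In every (b,r)-partition of E, for every clause C (original or copy), the matching E^C contains at least one edge of the blue spanning tree and at least one edge of the red spanning tree. -/
/-!
Common definitions for formalizing the NP-completeness reduction from
NotAllEqual 3-SAT to (b,r)-partitions of graphs.

An instance of NotAllEqual 3-SAT with variables in `α` and `n` clauses is
given by `cl : Fin n → Fin 3 → α`, clause `i` consisting of the three
(distinct) variables `cl i 0, cl i 1, cl i 2`.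

The vertex set of the associated graph `G(Π)`: the special vertex `s`,
the `u`-vertices `u i o j` and the `v`-vertices `v i o j`, where `i : Fin n`
is a clause index, `o : Bool` tells whether we are in the gadget of the
original clause (`false`) or of its copy (`true`), and `j : Fin 3` is the
position of a variable inside the clause.
-/

inductive GVert (n : ℕ) : Type
  | s : GVert n
  | u : Fin n → Bool → Fin 3 → GVert n
  | v : Fin n → Bool → Fin 3 → GVert n
  deriving DecidableEq

/-- The occurrences of the variable `x`: the pairs (clause index, position)
where `x` appears. -/
def occs {α : Type*} [DecidableEq α] {n : ℕ} (cl : Fin n → Fin 3 → α) (x : α) :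
    Finset (Fin n × Fin 3) :=
  Finset.univ.filter (fun p => cl p.1 p.2 = x)

/-- The cyclic successor of an occurrence `p` among the occurrences of the
variable sitting at `p`; this is used to build the cycle `Δ_x`. -/
noncomputable def nextOcc {α : Type*} [DecidableEq α] {n : ℕ}
    (cl : Fin n → Fin 3 → α) (p : Fin n × Fin 3) : Fin n × Fin 3 :=
  (occs cl (cl p.1 p.2)).toList.next p (by simp [occs, Finset.mem_toList])

/-- The edges of `G(Π)`: the star at `s`, the triangles on `U^C`, the
matchings `E^C`, and the cycles `Δ_x` (which alternate `v`-vertices of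
original-clause gadgets and of copy gadgets; the cycle for the variable `x`
is `v p₁ false, v p₁ true, v p₂ false, v p₂ true, …` over the occurrences
`p₁, p₂, …` of `x` in cyclic order). -/
inductive EdgeSpec {α : Type*} [DecidableEq α] {n : ℕ} (cl : Fin n → Fin 3 → α) :
    GVert n → GVert n → Prop
  | star (i : Fin n) (o : Bool) (j : Fin 3) : EdgeSpec cl .s (.u i o j)
  | tri (i : Fin n) (o : Bool) {j j' : Fin 3} (h : j ≠ j') :
      EdgeSpec cl (.u i o j) (.u i o j')
  | mat (i : Fin n) (o : Bool) (j : Fin 3) : EdgeSpec cl (.u i o j) (.v i o j)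
  | cycA (p : Fin n × Fin 3) : EdgeSpec cl (.v p.1 false p.2) (.v p.1 true p.2)
  | cycB (p : Fin n × Fin 3) :
      EdgeSpec cl (.v p.1 true p.2) (.v (nextOcc cl p).1 false (nextOcc cl p).2)

/-- The graph `G(Π)` associated to the NotAllEqual 3-SAT instance. -/
noncomputable def gadgetGraph {α : Type*} [DecidableEq α] {n : ℕ}
    (cl : Fin n → Fin 3 → α) : SimpleGraph (GVert n) :=
  SimpleGraph.fromRel (EdgeSpec cl)

/-- The blue outdegree prescription `b`. -/
def bvec (n : ℕ) : GVert n → ℕ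
  | .s => 3 * n
  | .u _ _ _ => 1
  | .v _ o _ => if o then 0 else 1

/-- The red outdegree prescription `r`. -/
def rvec (n : ℕ) : GVert n → ℕ
  | .s => 3 * n
  | .u _ _ _ => 1
  | .v _ o _ => if o then 1 else 0

/-- `dir` is an orientation of the edge set `F`: every directed pair lies in
`F`, and every edge of `F` gets exactly one direction. -/
def IsOrientation {V : Type*} (F : Set (Sym2 V)) (dir : V → V → Prop) : Prop :=
  (∀ a b, dir a b → s(a, b) ∈ F) ∧
    ∀ a b, s(a, b) ∈ F → (dir a b ∨ dir b a) ∧ ¬(dir a b ∧ dir b a)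

/-- `dir` is an `m`-orientation of `F`: an orientation in which exactly `m v`
arcs leave each vertex `v`. -/
def IsMOrientation {V : Type*} (F : Set (Sym2 V)) (m : V → ℕ)
    (dir : V → V → Prop) : Prop :=
  IsOrientation F dir ∧ ∀ v, Nat.card {w // dir v w} = m v

/-- `B` and `R` partition the edges of `G` into two spanning trees. -/
def IsTreePartition {V : Type*} (G B R : SimpleGraph V) : Prop :=
  B ≤ G ∧ R ≤ G ∧ B.IsTree ∧ R.IsTree ∧
    Disjoint B.edgeSet R.edgeSet ∧ B.edgeSet ∪ R.edgeSet = G.edgeSet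

/-- `(B, R)` is a `(b,r)`-partition of (the edge set of) `G`: a partition
into a blue spanning tree having a `b`-orientation and a red spanning tree
having an `r`-orientation. -/
def IsBRPartition {V : Type*} (G : SimpleGraph V) (b r : V → ℕ)
    (B R : SimpleGraph V) : Prop :=
  IsTreePartition G B R ∧
    (∃ d, IsMOrientation B.edgeSet b d) ∧ ∃ d, IsMOrientation R.edgeSet r d

/-- `G` admits some `(b,r)`-partition. -/
def HasBRPartition {V : Type*} (G : SimpleGraph V) (b r : V → ℕ) : Prop :=
  ∃ B R, IsBRPartition G b r B R

/-- The blue/red coloring `c` (`true` = blue, `false` = red) satisfies the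
NotAllEqual 3-SAT instance: every clause contains a blue and a red variable. -/
def NAESatisfies {α : Type*} {n : ℕ} (cl : Fin n → Fin 3 → α) (c : α → Bool) :
    Prop :=
  ∀ i : Fin n, (∃ j, c (cl i j) = true) ∧ ∃ j, c (cl i j) = false

/-- The matching edge `u^C_x v^C_x` at occurrence `p`, in the original gadget
(`o = false`) or the copy gadget (`o = true`). -/
def mEdge {n : ℕ} (p : Fin n × Fin 3) (o : Bool) : Sym2 (GVert n) :=
  s(GVert.u p.1 o p.2, GVert.v p.1 o p.2)

/-!
Every edge at `s` is a `u`-vertex edge, so `s` has degree `6n = b(s) + r(s)`: in each tree all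
edges at `s` must therefore leave `s`. A `u`-vertex of a gadget has outdegree one in each tree,
and its arc cannot go to `s`. If no matching edge of the gadget lay in a tree, the three arcs
leaving `U^C` would stay inside the triangle `U^C`; three arcs on a triangle, one leaving each
vertex, either orient one edge both ways or form a directed triangle, which a tree cannot contain.
-/

namespace IsOrientation

variable {V : Type*} {F : Set (Sym2 V)} {d : V → V → Prop}

theorem mem (hd : IsOrientation F d) {a b : V} (h : d a b) : s(a, b) ∈ F :=
  hd.1 a b h

theorem asymm (hd : IsOrientation F d) {a b : V} (h : d a b) : ¬d b a :=
  fun h' => (hd.2 a b (hd.mem h)).2 ⟨h, h'⟩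

theorem dir_of_ncard_neighborSet_le [Finite V] {G : SimpleGraph V} {E : Set (Sym2 V)}
    {e : V → V → Prop} (hd : IsOrientation F d) (he : IsOrientation E e)
    (hdisj : Disjoint F E) (hun : F ∪ E = G.edgeSet) {v : V}
    (hv : (G.neighborSet v).ncard ≤ Nat.card {w // d v w} + Nat.card {w // e v w})
    {w : V} (hw : s(v, w) ∈ F) : d v w := by
  have hdF : {w | d v w} ⊆ {w | s(v, w) ∈ F} := fun _ => hd.mem
  have heE : {w | e v w} ⊆ {w | s(v, w) ∈ E} := fun _ => he.mem
  have hsplit : {w | s(v, w) ∈ F} ∪ {w | s(v, w) ∈ E} = G.neighborSet v := by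
    ext w
    simp only [Set.mem_union, Set.mem_ofPred_eq, SimpleGraph.mem_neighborSet,
      ← SimpleGraph.mem_edgeSet, ← hun]
  have hcard := Set.ncard_union_eq (s := {w | s(v, w) ∈ F}) (t := {w | s(v, w) ∈ E})
    (Set.disjoint_left.mpr fun _ h₁ h₂ => Set.disjoint_left.mp hdisj h₁ h₂)
  rw [hsplit] at hcard
  rw [show Nat.card {w // d v w} = {w | d v w}.ncard from Nat.card_coe_set_eq _,
    show Nat.card {w // e v w} = {w | e v w}.ncard from Nat.card_coe_set_eq _] at hv
  have hle := Set.ncard_le_ncard heE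
  have hF : {w | d v w} = {w | s(v, w) ∈ F} :=
    Set.eq_of_subset_of_ncard_le hdF (by omega)
  exact hF.symm.subset hw

end IsOrientation

theorem SimpleGraph.IsAcyclic.exists_forall_not_dir_fin_three {V : Type*} {T : SimpleGraph V}
    (hT : T.IsAcyclic) {d : V → V → Prop} (hd : IsOrientation T.edgeSet d) (a : Fin 3 → V) :
    ∃ j, ∀ j', ¬d (a j) (a j') := by
  by_contra! h
  choose g hg using h
  have hne : ∀ j, g j ≠ j := fun j hj => by
    have hloop := hg j
    rw [hj] at hloop
    exact hd.asymm hloop hloop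
  by_cases htwo : ∃ j, g (g j) = j
  · obtain ⟨j, hj⟩ := htwo
    have hback := hg (g j)
    rw [hj] at hback
    exact hd.asymm (hg j) hback
  push Not at htwo
  have hthree : g (g (g 0)) = 0 := by
    have hcycle : ∀ x y z w : Fin 3, y ≠ x → z ≠ y → z ≠ x → w ≠ z → w ≠ y → w = x := by decide
    exact hcycle _ _ _ _ (hne 0) (hne _) (htwo 0) (hne _) (htwo _)
  have hadj : ∀ j, T.Adj (a j) (a (g j)) := fun j => hd.mem (hg j)
  have hca := hadj (g (g 0))
  rw [hthree] at hca
  classical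
  exact hT.cliqueFree le_rfl _
    (SimpleGraph.is3Clique_triple_iff.mpr ⟨hadj 0, hca.symm, hadj (g 0)⟩)

instance {n : ℕ} : Finite (GVert n) :=
  Finite.of_surjective
    (fun x : Option (Bool × Fin n × Bool × Fin 3) => match x with
      | none => GVert.s
      | some (false, i, o, j) => GVert.u i o j
      | some (true, i, o, j) => GVert.v i o j)
    fun
      | .s => ⟨none, rfl⟩
      | .u i o j => ⟨some (false, i, o, j), rfl⟩
      | .v i o j => ⟨some (true, i, o, j), rfl⟩

section Gadget

variable {α : Type*} [DecidableEq α] {n : ℕ} {cl : Fin n → Fin 3 → α}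

theorem gadgetGraph_adj_s {w : GVert n} (h : (gadgetGraph cl).Adj GVert.s w) :
    ∃ i o j, w = GVert.u i o j := by
  rw [gadgetGraph, SimpleGraph.fromRel_adj] at h
  rcases h with ⟨-, h | h⟩ <;> cases h
  exact ⟨_, _, _, rfl⟩

theorem gadgetGraph_adj_u {i : Fin n} {o : Bool} {j : Fin 3} {w : GVert n}
    (h : (gadgetGraph cl).Adj (GVert.u i o j) w) :
    w = GVert.s ∨ (∃ j', w = GVert.u i o j') ∨ w = GVert.v i o j := by
  rw [gadgetGraph, SimpleGraph.fromRel_adj] at h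
  rcases h with ⟨-, h | h⟩
  · cases h with
    | tri => exact .inr (.inl ⟨_, rfl⟩)
    | mat => exact .inr (.inr rfl)
  · cases h with
    | star => exact .inl rfl
    | tri => exact .inr (.inl ⟨_, rfl⟩)

theorem ncard_neighborSet_s_le : ((gadgetGraph cl).neighborSet GVert.s).ncard ≤ 6 * n := by
  let uVert : Fin n × Bool × Fin 3 → GVert n := fun x => GVert.u x.1 x.2.1 x.2.2
  have hsub : (gadgetGraph cl).neighborSet GVert.s ⊆ Set.range uVert := by
    intro w hw
    obtain ⟨i, o, j, rfl⟩ := gadgetGraph_adj_s hw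
    exact ⟨(i, o, j), rfl⟩
  calc ((gadgetGraph cl).neighborSet GVert.s).ncard
      ≤ (uVert '' Set.univ).ncard := Set.image_univ (f := uVert) ▸ Set.ncard_le_ncard hsub
    _ ≤ (Set.univ : Set (Fin n × Bool × Fin 3)).ncard := Set.ncard_image_le
    _ = 6 * n := by
      simp only [Set.ncard_univ, Nat.card_eq_fintype_card, Fintype.card_prod, Fintype.card_fin,
        Fintype.card_bool]
      ring

theorem exists_matching_edge_mem {T : SimpleGraph (GVert n)} (hle : T ≤ gadgetGraph cl)
    (hT : T.IsAcyclic) {d : GVert n → GVert n → Prop} (hd : IsOrientation T.edgeSet d)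
    (hs : ∀ w, s(GVert.s, w) ∈ T.edgeSet → d GVert.s w) (i : Fin n) (o : Bool)
    (hout : ∀ j, Nonempty {w // d (GVert.u i o j) w}) :
    ∃ j : Fin 3, s(GVert.u i o j, GVert.v i o j) ∈ T.edgeSet := by
  obtain ⟨j, hj⟩ := hT.exists_forall_not_dir_fin_three hd (fun j => GVert.u i o j)
  obtain ⟨⟨w, hw⟩⟩ := hout j
  refine ⟨j, ?_⟩
  rcases gadgetGraph_adj_u (hle (hd.mem hw)) with rfl | ⟨j', rfl⟩ | rfl
  · exact absurd hw (hd.asymm (hs _ (Sym2.eq_swap ▸ hd.mem hw)))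
  · exact absurd hw (hj j')
  · exact hd.mem hw

end Gadget

theorem stmt6_general {α : Type*} [DecidableEq α] {n : ℕ} (cl : Fin n → Fin 3 → α)
    (B R : SimpleGraph (GVert n))
    (hBR : IsBRPartition (gadgetGraph cl) (bvec n) (rvec n) B R) :
    ∀ (i : Fin n) (o : Bool),
      (∃ j : Fin 3, s(GVert.u i o j, GVert.v i o j) ∈ B.edgeSet) ∧
      (∃ j : Fin 3, s(GVert.u i o j, GVert.v i o j) ∈ R.edgeSet) := by
  obtain ⟨⟨hBG, hRG, hB, hR, hdisj, hun⟩, ⟨dB, hdB, hcB⟩, ⟨dR, hdR, hcR⟩⟩ := hBR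
  have hdeg : ((gadgetGraph cl).neighborSet GVert.s).ncard
      ≤ Nat.card {w // dB GVert.s w} + Nat.card {w // dR GVert.s w} := by
    rw [hcB, hcR]
    exact ncard_neighborSet_s_le.trans (by simp only [bvec, rvec]; omega)
  have hsB : ∀ w, s(GVert.s, w) ∈ B.edgeSet → dB GVert.s w := fun _ =>
    hdB.dir_of_ncard_neighborSet_le hdR hdisj hun hdeg
  have hsR : ∀ w, s(GVert.s, w) ∈ R.edgeSet → dR GVert.s w := fun _ =>
    hdR.dir_of_ncard_neighborSet_le hdB hdisj.symm (Set.union_comm _ _ ▸ hun)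
      (add_comm (Nat.card {w // dB GVert.s w}) _ ▸ hdeg)
  intro i o
  exact ⟨exists_matching_edge_mem hBG hB.isAcyclic hdB hsB i o
      fun j => (Nat.card_eq_one_iff_unique.mp (hcB _)).2,
    exists_matching_edge_mem hRG hR.isAcyclic hdR hsR i o
      fun j => (Nat.card_eq_one_iff_unique.mp (hcR _)).2⟩

/-- In every `(b,r)`-partition of `G(Π)`, for every clause
gadget (original or copy), the matching `E^C` contains at least one blue edge
and at least one red edge. -/
theorem stmt6 {α : Type*} [DecidableEq α] {n : ℕ} (cl : Fin n → Fin 3 → α)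
    (hcl : ∀ i, Function.Injective (cl i)) (B R : SimpleGraph (GVert n))
    (hBR : IsBRPartition (gadgetGraph cl) (bvec n) (rvec n) B R) :
    ∀ (i : Fin n) (o : Bool),
      (∃ j : Fin 3, s(GVert.u i o j, GVert.v i o j) ∈ B.edgeSet) ∧
      (∃ j : Fin 3, s(GVert.u i o j, GVert.v i o j) ∈ R.edgeSet) :=
  stmt6_general cl B R hBR
end

section
/- Let Π be an instance of NotAllEqual 3-SAT with n clauses and G(Π)=(V,E), b, r the associated construction. In every (b,r)-partition of E, for every variable x: all the matching edges u^C_x v^C_x, where C ranges over the original clauses containing x, belong to the same spanning tree, and all the matching edges u^{C'}_x v^{C'}_x, where C' ranges over the copies of the clauses containing x, belong to the other spanning tree. -/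
/-!
Fix a variable `x`. On the `v`-vertices the blue and red outdegrees are `1, 0` on original
gadgets and `0, 1` on copies, so in its tree a blue edge of `Δ_x` leaves its original end and a
red one its copy end. Hence no original `v`-vertex meets two blue edges of `Δ_x` and no copy
`v`-vertex two red ones, and the colours alternate around `Δ_x`. Every `v`-vertex has exactly
one edge besides those of `Δ_x`, its matching edge, so each monochromatic pair of consecutive
vertices of `Δ_x` reaches the rest of its tree only through its two matching edges; this forces
the matching edges to alternate as well. A variable with a single occurrence is impossible: then
`Δ_x` is a single edge and the tree avoiding it would need both matching edges.
-/

theorem List.Nodup.induction_next {β : Type*} [DecidableEq β] {l : List β} (hl : l.Nodup)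
    {P : β → Prop} (hP : ∀ a (ha : a ∈ l), P a → P (l.next a ha)) {p q : β} (hp : p ∈ l)
    (hq : q ∈ l) (h : P p) : P q := by
  obtain ⟨i, hi, rfl⟩ := List.getElem_of_mem hp
  obtain ⟨j, hj, rfl⟩ := List.getElem_of_mem hq
  have hpos : 0 < l.length := by omega
  have key : ∀ k, P (l[(i + k) % l.length]'(Nat.mod_lt _ hpos)) := by
    intro k
    induction k with
    | zero => simpa [Nat.mod_eq_of_lt hi] using h
    | succ k ih =>
      have := hP _ (List.getElem_mem _) ih
      rw [List.next_getElem l hl _ (Nat.mod_lt _ hpos)] at this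
      simpa only [Nat.mod_add_mod, Nat.add_assoc] using this
  have hj' : (i + (l.length - i + j)) % l.length = j := by
    rw [← Nat.add_assoc, Nat.add_sub_cancel' hi.le, Nat.add_mod_left, Nat.mod_eq_of_lt hj]
  simpa only [hj'] using key (l.length - i + j)

theorem List.Nodup.next_injective {β : Type*} [DecidableEq β] {l : List β} (hl : l.Nodup)
    {a b : β} (ha : a ∈ l) (hb : b ∈ l) (h : l.next a ha = l.next b hb) : a = b := by
  rw [← List.formPerm_apply_mem_eq_next hl _ ha, ← List.formPerm_apply_mem_eq_next hl _ hb] at h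
  exact l.formPerm.injective h

theorem SimpleGraph.Connected.exists_adj_of_mem_of_notMem {V : Type*} {T : SimpleGraph V}
    (hT : T.Connected) {S : Set V} {a c : V} (ha : a ∈ S) (hc : c ∉ S) :
    ∃ z ∈ S, ∃ y ∉ S, T.Adj z y := by
  obtain ⟨d, -, hd, hd'⟩ := (hT a c).some.exists_boundary_dart S ha hc
  exact ⟨d.fst, hd, d.snd, hd', d.adj⟩

theorem IsMOrientation.eq_of_outdeg_zero {V : Type*} [Finite V] {F : Set (Sym2 V)}
    {m : V → ℕ} {d : V → V → Prop} (h : IsMOrientation F m d) {a b b' : V} (ha : m a = 1)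
    (hb : m b = 0) (hb' : m b' = 0) (hab : s(a, b) ∈ F) (hab' : s(a, b') ∈ F) : b = b' := by
  have not_out : ∀ {c w}, m c = 0 → ¬d c w := fun {c w} hc hcw => by
    have : Nonempty {w // d c w} := ⟨⟨w, hcw⟩⟩
    exact (Nat.card_pos (α := {w // d c w})).ne' ((h.2 c).trans hc)
  have hdb := (h.1.2 a b hab).1.resolve_right (not_out hb)
  have hdb' := (h.1.2 a b' hab').1.resolve_right (not_out hb')
  have : Subsingleton {w // d a w} := (Nat.card_eq_one_iff_unique.mp ((h.2 a).trans ha)).1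
  exact congrArg Subtype.val (Subsingleton.elim (⟨b, hdb⟩ : {w // d a w}) ⟨b', hdb'⟩)

namespace IsTreePartition

variable {V : Type*} {G T T' : SimpleGraph V}

theorem symm (h : IsTreePartition G T T') : IsTreePartition G T' T :=
  ⟨h.2.1, h.1, h.2.2.2.1, h.2.2.1, h.2.2.2.2.1.symm, by rw [Set.union_comm]; exact h.2.2.2.2.2⟩

theorem notMem_right (h : IsTreePartition G T T') {e : Sym2 V} (he : e ∈ T.edgeSet) :
    e ∉ T'.edgeSet :=
  Set.disjoint_left.mp h.2.2.2.2.1 he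

theorem mem_right_of_notMem_left (h : IsTreePartition G T T') {e : Sym2 V}
    (he : e ∈ G.edgeSet) (hT : e ∉ T.edgeSet) : e ∈ T'.edgeSet := by
  rw [← h.2.2.2.2.2] at he
  exact he.resolve_left hT

/-- The tree avoiding the edge `ab` must contain `aa'` and `bb'`, which leaves the other tree
no edge out of `{a, b}`. -/
theorem false_of_neighbors_subset (h : IsTreePartition G T T') {a b a' b' c : V}
    (ha : ∀ y, G.Adj a y → y = a' ∨ y = b) (hb : ∀ y, G.Adj b y → y = b' ∨ y = a)
    (hca : c ≠ a) (hcb : c ≠ b) : False := by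
  wlog hab : ¬T'.Adj a b generalizing T T'
  · exact this h.symm (h.symm.notMem_right (e := s(a, b)) (not_not.mp hab))
  have hT' := h.2.2.2.1.connected
  have hT := h.2.2.1.connected
  have haa' : T'.Adj a a' := by
    obtain ⟨z, rfl, y, -, hzy⟩ := hT'.exists_adj_of_mem_of_notMem (S := {a}) rfl hca
    obtain rfl | rfl := ha y (h.2.1 hzy)
    exacts [hzy, absurd hzy hab]
  have hbb' : T'.Adj b b' := by
    obtain ⟨z, rfl, y, -, hzy⟩ := hT'.exists_adj_of_mem_of_notMem (S := {b}) rfl hcb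
    obtain rfl | rfl := hb y (h.2.1 hzy)
    exacts [hzy, absurd hzy.symm hab]
  obtain ⟨z, hz, y, hy, hzy⟩ :=
    hT.exists_adj_of_mem_of_notMem (S := {a, b}) (a := a) (by simp) (c := c) (by simp [hca, hcb])
  simp only [Set.mem_insert_iff, Set.mem_singleton_iff, not_or] at hz hy
  rcases hz with rfl | rfl
  · obtain rfl | rfl := ha y (h.1 hzy)
    exacts [h.notMem_right (e := s(_, _)) hzy haa', hy.2 rfl]
  · obtain rfl | rfl := hb y (h.1 hzy)
    exacts [h.notMem_right (e := s(_, _)) hzy hbb', hy.1 rfl]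

end IsTreePartition

section Occurrences

variable {α : Type*} [DecidableEq α] {n : ℕ} (cl : Fin n → Fin 3 → α)

@[simp]
lemma mem_occs {x : α} {p : Fin n × Fin 3} : p ∈ occs cl x ↔ cl p.1 p.2 = x := by
  simp [occs]

lemma nextOcc_eq_next {x : α} {p : Fin n × Fin 3} (hp : p ∈ occs cl x) :
    nextOcc cl p = (occs cl x).toList.next p (Finset.mem_toList.mpr hp) := by
  rw [mem_occs] at hp
  subst hp
  rfl

lemma cl_nextOcc (p : Fin n × Fin 3) :
    cl (nextOcc cl p).1 (nextOcc cl p).2 = cl p.1 p.2 := by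
  have hp : p ∈ occs cl (cl p.1 p.2) := by simp
  have := List.next_mem _ _ (Finset.mem_toList.mpr hp)
  rwa [← nextOcc_eq_next cl hp, Finset.mem_toList, mem_occs] at this

lemma nextOcc_mem_occs_iff {x : α} {p : Fin n × Fin 3} :
    nextOcc cl p ∈ occs cl x ↔ p ∈ occs cl x := by
  simp only [mem_occs, cl_nextOcc]

lemma nextOcc_injective : Function.Injective (nextOcc cl) := by
  intro p q h
  have hp : p ∈ occs cl (cl p.1 p.2) := (mem_occs cl).mpr rfl
  have hq : q ∈ occs cl (cl p.1 p.2) := by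
    rw [mem_occs, ← cl_nextOcc cl q, ← h, cl_nextOcc cl p]
  rw [nextOcc_eq_next cl hp, nextOcc_eq_next cl hq] at h
  exact (Finset.nodup_toList _).next_injective _ _ h

lemma occs_induction {x : α} {P : Fin n × Fin 3 → Prop}
    (hP : ∀ p ∈ occs cl x, P p → P (nextOcc cl p)) {p q : Fin n × Fin 3}
    (hp : p ∈ occs cl x) (hq : q ∈ occs cl x) (h : P p) : P q := by
  refine (Finset.nodup_toList _).induction_next (fun a ha hPa => ?_)
    (Finset.mem_toList.mpr hp) (Finset.mem_toList.mpr hq) h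
  rw [← nextOcc_eq_next cl (Finset.mem_toList.mp ha)]
  exact hP a (Finset.mem_toList.mp ha) hPa

lemma occs_alternate {x : α}
    {a b : Fin n × Fin 3 → Prop} (h₁ : ∀ p ∈ occs cl x, a p ∨ b p)
    (h₂ : ∀ p ∈ occs cl x, ¬(a (nextOcc cl p) ∧ b p)) :
    (∀ p ∈ occs cl x, a p ∧ ¬b p) ∨ (∀ p ∈ occs cl x, ¬a p ∧ b p) := by
  by_cases hb : ∃ p ∈ occs cl x, b p
  · obtain ⟨p, hp, hbp⟩ := hb
    have hna : ∀ q ∈ occs cl x, ¬a q := fun q hq =>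
      occs_induction cl (P := fun q => ¬a q)
        (fun r hr har han => h₂ r hr ⟨han, (h₁ r hr).resolve_left har⟩)
        ((nextOcc_mem_occs_iff cl).mpr hp) hq (fun han => h₂ p hp ⟨han, hbp⟩)
    exact .inr fun q hq => ⟨hna q hq, (h₁ q hq).resolve_left (hna q hq)⟩
  · push Not at hb
    exact .inl fun q hq => ⟨(h₁ q hq).resolve_right (hb q hq), hb q hq⟩

end Occurrences

instance (n : ℕ) : Finite (GVert n) :=
  Finite.of_injective (β := Option (Fin n × Bool × Fin 3 × Bool))
    (fun | .s => none | .u i o j => some (i, o, j, false) | .v i o j => some (i, o, j, true))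
    (by rintro (_ | ⟨_, _, _⟩ | ⟨_, _, _⟩) (_ | ⟨_, _, _⟩ | ⟨_, _, _⟩) <;> simp)

section Gadget

variable {α : Type*} [DecidableEq α] {n : ℕ} (cl : Fin n → Fin 3 → α)

lemma gadgetGraph_adj_v_true (p : Fin n × Fin 3) (w : GVert n) :
    (gadgetGraph cl).Adj (.v p.1 true p.2) w ↔
      w = .u p.1 true p.2 ∨ w = .v p.1 false p.2 ∨
        w = .v (nextOcc cl p).1 false (nextOcc cl p).2 := by
  obtain ⟨i, j⟩ := p
  simp only [gadgetGraph, SimpleGraph.fromRel_adj]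
  constructor
  · rintro ⟨-, h | h⟩ <;> cases h <;> simp
  · rintro (rfl | rfl | rfl)
    · exact ⟨by simp, .inr (.mat i true j)⟩
    · exact ⟨by simp, .inr (.cycA (i, j))⟩
    · exact ⟨by simp, .inl (.cycB (i, j))⟩

lemma gadgetGraph_adj_v_false (p : Fin n × Fin 3) (w : GVert n) :
    (gadgetGraph cl).Adj (.v p.1 false p.2) w ↔
      w = .u p.1 false p.2 ∨ w = .v p.1 true p.2 ∨
        ∃ q, nextOcc cl q = p ∧ w = .v q.1 true q.2 := by
  obtain ⟨i, j⟩ := p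
  simp only [gadgetGraph, SimpleGraph.fromRel_adj]
  constructor
  · rintro ⟨-, h | h⟩ <;> cases h <;> simp
  · rintro (rfl | rfl | ⟨q, hq, rfl⟩)
    · exact ⟨by simp, .inr (.mat i false j)⟩
    · exact ⟨by simp, .inl (.cycA (i, j))⟩
    · exact ⟨by simp, .inr (by simpa [hq] using EdgeSpec.cycB (cl := cl) q)⟩

/-- The edge `v^C_x v^{C'}_x` of the cycle `Δ_x`. -/
def cycEdge (p : Fin n × Fin 3) : Sym2 (GVert n) :=
  s(GVert.v p.1 false p.2, GVert.v p.1 true p.2)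

/-- The edge of `Δ_x` joining the copy gadget at `p` to the original gadget at the next
occurrence of the same variable. -/
noncomputable def cycEdgeNext (p : Fin n × Fin 3) : Sym2 (GVert n) :=
  s(GVert.v p.1 true p.2, GVert.v (nextOcc cl p).1 false (nextOcc cl p).2)

lemma mEdge_mem_edgeSet (p : Fin n × Fin 3) (o : Bool) :
    mEdge p o ∈ (gadgetGraph cl).edgeSet := by
  cases o
  · exact ((gadgetGraph_adj_v_false cl p _).mpr (.inl rfl)).symm
  · exact ((gadgetGraph_adj_v_true cl p _).mpr (.inl rfl)).symm

lemma cycEdge_mem_edgeSet (p : Fin n × Fin 3) : cycEdge p ∈ (gadgetGraph cl).edgeSet :=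
  (gadgetGraph_adj_v_false cl p _).mpr (.inr (.inl rfl))

lemma cycEdgeNext_mem_edgeSet (p : Fin n × Fin 3) :
    cycEdgeNext cl p ∈ (gadgetGraph cl).edgeSet :=
  (gadgetGraph_adj_v_true cl p _).mpr (.inr (.inr rfl))

variable {cl} {T : SimpleGraph (GVert n)}

lemma mEdge_mem_or_cycEdgeNext_mem (hTG : T ≤ gadgetGraph cl) (hT : T.Connected) {x : α}
    {p : Fin n × Fin 3} (hp : p ∈ occs cl x) :
    mEdge p false ∈ T.edgeSet ∨ mEdge p true ∈ T.edgeSet ∨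
      ∃ q ∈ occs cl x, cycEdgeNext cl q ∈ T.edgeSet := by
  obtain ⟨z, hz, y, hy, hzy⟩ := hT.exists_adj_of_mem_of_notMem
    (S := {.v p.1 false p.2, .v p.1 true p.2}) (a := .v p.1 false p.2) (by simp)
    (c := .s) (by simp)
  simp only [Set.mem_insert_iff, Set.mem_singleton_iff, not_or] at hz hy
  rcases hz with rfl | rfl
  · rcases (gadgetGraph_adj_v_false cl p y).mp (hTG hzy) with rfl | rfl | ⟨q, rfl, rfl⟩
    · exact .inl hzy.symm
    · exact absurd rfl hy.2
    · exact .inr (.inr ⟨q, (nextOcc_mem_occs_iff cl).mp hp, hzy.symm⟩)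
  · rcases (gadgetGraph_adj_v_true cl p y).mp (hTG hzy) with rfl | rfl | rfl
    · exact .inr (.inl hzy.symm)
    · exact absurd rfl hy.1
    · exact .inr (.inr ⟨p, hp, hzy⟩)

lemma mEdge_mem_or_cycEdge_mem (hTG : T ≤ gadgetGraph cl) (hT : T.Connected) {x : α}
    {p : Fin n × Fin 3} (hp : p ∈ occs cl x) :
    mEdge p true ∈ T.edgeSet ∨ mEdge (nextOcc cl p) false ∈ T.edgeSet ∨
      ∃ q ∈ occs cl x, cycEdge q ∈ T.edgeSet := by
  obtain ⟨z, hz, y, hy, hzy⟩ := hT.exists_adj_of_mem_of_notMem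
    (S := {.v p.1 true p.2, .v (nextOcc cl p).1 false (nextOcc cl p).2})
    (a := .v p.1 true p.2) (by simp) (c := .s) (by simp)
  simp only [Set.mem_insert_iff, Set.mem_singleton_iff, not_or] at hz hy
  rcases hz with rfl | rfl
  · rcases (gadgetGraph_adj_v_true cl p y).mp (hTG hzy) with rfl | rfl | rfl
    · exact .inl hzy.symm
    · exact .inr (.inr ⟨p, hp, hzy.symm⟩)
    · exact absurd rfl hy.2
  · rcases (gadgetGraph_adj_v_false cl _ y).mp (hTG hzy) with rfl | rfl | ⟨q, hq, rfl⟩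
    · exact .inr (.inl hzy.symm)
    · exact .inr (.inr ⟨_, (nextOcc_mem_occs_iff cl).mpr hp, hzy⟩)
    · exact absurd (by rw [nextOcc_injective cl hq]) hy.1

lemma nextOcc_ne_self {T' : SimpleGraph (GVert n)}
    (h : IsTreePartition (gadgetGraph cl) T T') (p : Fin n × Fin 3) : nextOcc cl p ≠ p := by
  intro hfix
  refine h.false_of_neighbors_subset (a := .v p.1 false p.2) (b := .v p.1 true p.2)
    (a' := .u p.1 false p.2) (b' := .u p.1 true p.2) (c := .s) (fun y hy => ?_) (fun y hy => ?_)
    (by simp) (by simp)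
  · rcases (gadgetGraph_adj_v_false cl p y).mp hy with rfl | rfl | ⟨q, hq, rfl⟩
    · exact .inl rfl
    · exact .inr rfl
    · rw [nextOcc_injective cl (hq.trans hfix.symm)]
      exact .inr rfl
  · rw [gadgetGraph_adj_v_true, hfix] at hy
    tauto

end Gadget

section Partition

variable {α : Type*} [DecidableEq α] {n : ℕ} {cl : Fin n → Fin 3 → α} {x : α}

lemma cycEdge_alternate {B R : SimpleGraph (GVert n)}
    (hBR : IsBRPartition (gadgetGraph cl) (bvec n) (rvec n) B R)
    (hne : ∀ p ∈ occs cl x, nextOcc cl p ≠ p) :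
    (∀ p ∈ occs cl x, cycEdge p ∈ B.edgeSet ∧ cycEdgeNext cl p ∈ R.edgeSet) ∨
      (∀ p ∈ occs cl x, cycEdge p ∈ R.edgeSet ∧ cycEdgeNext cl p ∈ B.edgeSet) := by
  obtain ⟨hpart, ⟨dB, hB⟩, ⟨dR, hR⟩⟩ := hBR
  have copy_not_two_red : ∀ p ∈ occs cl x,
      cycEdge p ∈ B.edgeSet ∨ cycEdgeNext cl p ∈ B.edgeSet := by
    refine fun p hp => or_iff_not_and_not.mpr fun ⟨h₁, h₂⟩ => hne p hp ?_
    have e₁ : s(GVert.v p.1 true p.2, .v p.1 false p.2) ∈ R.edgeSet := by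
      rw [Sym2.eq_swap]
      exact hpart.mem_right_of_notMem_left (cycEdge_mem_edgeSet cl p) h₁
    have e₂ : cycEdgeNext cl p ∈ R.edgeSet :=
      hpart.mem_right_of_notMem_left (cycEdgeNext_mem_edgeSet cl p) h₂
    have := hR.eq_of_outdeg_zero (by simp [rvec]) (by simp [rvec]) (by simp [rvec]) e₁ e₂
    simp only [GVert.v.injEq, true_and] at this
    exact (Prod.ext this.1 this.2).symm
  have original_not_two_blue : ∀ p ∈ occs cl x,
      ¬(cycEdge (nextOcc cl p) ∈ B.edgeSet ∧ cycEdgeNext cl p ∈ B.edgeSet) := by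
    refine fun p hp ⟨h₁, h₂⟩ => hne p hp ?_
    have e₂ : s(GVert.v (nextOcc cl p).1 false (nextOcc cl p).2, .v p.1 true p.2) ∈
        B.edgeSet := by
      rwa [Sym2.eq_swap]
    have := hB.eq_of_outdeg_zero (by simp [bvec]) (by simp [bvec]) (by simp [bvec]) h₁ e₂
    simp only [GVert.v.injEq, true_and] at this
    exact Prod.ext this.1 this.2
  refine (occs_alternate cl copy_not_two_red original_not_two_blue).imp
    (fun h p hp => ?_) (fun h p hp => ?_)
  · exact ⟨(h p hp).1, hpart.mem_right_of_notMem_left (cycEdgeNext_mem_edgeSet cl p) (h p hp).2⟩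
  · exact ⟨hpart.mem_right_of_notMem_left (cycEdge_mem_edgeSet cl p) (h p hp).1, (h p hp).2⟩

lemma mEdge_alternate {T T' : SimpleGraph (GVert n)}
    (h : IsTreePartition (gadgetGraph cl) T T')
    (hcyc : ∀ p ∈ occs cl x, cycEdge p ∈ T.edgeSet ∧ cycEdgeNext cl p ∈ T'.edgeSet) :
    (∀ p ∈ occs cl x, mEdge p false ∈ T.edgeSet ∧ mEdge p true ∈ T'.edgeSet) ∨
      (∀ p ∈ occs cl x, mEdge p false ∈ T'.edgeSet ∧ mEdge p true ∈ T.edgeSet) := by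
  have out_of_pair : ∀ p ∈ occs cl x, mEdge p false ∈ T.edgeSet ∨ mEdge p true ∈ T.edgeSet := by
    intro p hp
    obtain h' | h' | ⟨q, hq, hqT⟩ := mEdge_mem_or_cycEdgeNext_mem h.1 h.2.2.1.connected hp
    exacts [.inl h', .inr h', absurd (hcyc q hq).2 (h.notMem_right hqT)]
  have out_of_next_pair : ∀ p ∈ occs cl x,
      ¬(mEdge (nextOcc cl p) false ∈ T.edgeSet ∧ mEdge p true ∈ T.edgeSet) := by
    rintro p hp ⟨hf, ht⟩
    obtain h' | h' | ⟨q, hq, hqT'⟩ := mEdge_mem_or_cycEdge_mem h.2.1 h.2.2.2.1.connected hp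
    exacts [h.notMem_right ht h', h.notMem_right hf h', h.notMem_right (hcyc q hq).1 hqT']
  refine (occs_alternate cl out_of_pair out_of_next_pair).imp
    (fun h' p hp => ?_) (fun h' p hp => ?_)
  · exact ⟨(h' p hp).1, h.mem_right_of_notMem_left (mEdge_mem_edgeSet cl p true) (h' p hp).2⟩
  · exact ⟨h.mem_right_of_notMem_left (mEdge_mem_edgeSet cl p false) (h' p hp).1, (h' p hp).2⟩

end Partition

theorem stmt12_general {α : Type*} [DecidableEq α] {n : ℕ} (cl : Fin n → Fin 3 → α)
    (B R : SimpleGraph (GVert n))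
    (hBR : IsBRPartition (gadgetGraph cl) (bvec n) (rvec n) B R) :
    ∀ x : α,
      (∀ p ∈ occs cl x, mEdge p false ∈ B.edgeSet ∧ mEdge p true ∈ R.edgeSet) ∨
      (∀ p ∈ occs cl x, mEdge p false ∈ R.edgeSet ∧ mEdge p true ∈ B.edgeSet) := by
  intro x
  have hne : ∀ p ∈ occs cl x, nextOcc cl p ≠ p := fun p _ => nextOcc_ne_self hBR.1 p
  rcases cycEdge_alternate hBR hne with hB | hR
  · exact mEdge_alternate hBR.1 hB
  · exact (mEdge_alternate hBR.1.symm hR).symm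

/-- In every `(b,r)`-partition of `G(Π)`, for every variable
`x`, all original matching edges `u^C_x v^C_x` over clauses `C` containing `x`
lie in the same spanning tree, and all copy matching edges
`u^{C'}_x v^{C'}_x` lie in the other spanning tree. -/
theorem stmt12 {α : Type*} [DecidableEq α] {n : ℕ} (cl : Fin n → Fin 3 → α)
    (hcl : ∀ i, Function.Injective (cl i)) (B R : SimpleGraph (GVert n))
    (hBR : IsBRPartition (gadgetGraph cl) (bvec n) (rvec n) B R) :
    ∀ x : α,
      (∀ p ∈ occs cl x, mEdge p false ∈ B.edgeSet ∧ mEdge p true ∈ R.edgeSet) ∨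
      (∀ p ∈ occs cl x, mEdge p false ∈ R.edgeSet ∧ mEdge p true ∈ B.edgeSet) :=
  stmt12_general cl B R hBR
end
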